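/- Let G be a finite group, Φ(G) its Frattini subgroup, and p, q primes. Then q divides |G/O_{p',p}(G)| if and only if q divides |(G/Φ(G))/O_{p',p}(G/Φ(G))|. (The Hawkes graph function is E_Φ-closed: Γ_H(G/Φ(G)) = Γ_H(G).) -/

import Mathlib

/-- The join of a set of normal subgroups is normal. -/
theorem sSup_normal {G : Type*} [Group G] (S : Set (Subgroup G)) (hS : ∀ N ∈ S, N.Normal) :
    (sSup S).Normal := by
  constructor
  intro n hn g
  rw [sSup_eq_iSup'] at hn ⊢
  refine Subgroup.iSup_induction (C := fun x => g * x * g⁻¹ ∈ ⨆ N : S, (N : Subgroup G))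
    _ hn ?_ ?_ ?_
  · intro N x hx
    exact Subgroup.mem_iSup_of_mem N ((hS N N.2).conj_mem x hx g)
  · simpa using Subgroup.one_mem _
  · intro x y hx hy
    have h : g * (x * y) * g⁻¹ = (g * x * g⁻¹) * (g * y * g⁻¹) := by group
    rw [h]; exact Subgroup.mul_mem _ hx hy

/-- The `p'`-core `O_{p'}(G)`: the largest normal subgroup of `G` of order coprime to `p`,
realized as the join of all normal subgroups of order coprime to `p`. -/
def pPrimeCore (p : ℕ) (G : Type*) [Group G] : Subgroup G :=
  sSup {N : Subgroup G | N.Normal ∧ Nat.Coprime (Nat.card N) p}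

instance pPrimeCore_normal (p : ℕ) (G : Type*) [Group G] : (pPrimeCore p G).Normal :=
  sSup_normal _ fun _ hN => hN.1

/-- The `p`-core `O_p(G)`: the largest normal `p`-subgroup of `G`,
realized as the join of all normal `p`-subgroups. -/
def pCore (p : ℕ) (G : Type*) [Group G] : Subgroup G :=
  sSup {N : Subgroup G | N.Normal ∧ IsPGroup p N}

instance pCore_normal (p : ℕ) (G : Type*) [Group G] : (pCore p G).Normal :=
  sSup_normal _ fun _ hN => hN.1

/-- `O_{p',p}(G)`: the preimage in `G` of `O_p(G / O_{p'}(G))`. -/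
def OpPrimeP (p : ℕ) (G : Type*) [Group G] : Subgroup G :=
  (pCore p (G ⧸ pPrimeCore p G)).comap (QuotientGroup.mk' (pPrimeCore p G))

/-- A Schmidt group: a non-nilpotent group all of whose proper subgroups are nilpotent. -/
def IsSchmidt (G : Type*) [Group G] : Prop :=
  ¬ Group.IsNilpotent G ∧ ∀ H : Subgroup G, H ≠ ⊤ → Group.IsNilpotent H

/-- A Schmidt `(p,q)`-group: a Schmidt group whose order is divisible by exactly the
primes `p` and `q` and whose Sylow `p`-subgroup is normal. -/
def IsSchmidtPQ (p q : ℕ) (G : Type*) [Group G] : Prop :=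
  IsSchmidt G ∧ (Nat.card G).primeFactors = {p, q} ∧ ∃ P : Sylow p G, (P : Subgroup G).Normal

/-!
Write `Φ = Φ(G)`. Since `O_{p',p}(G)` maps into `O_{p',p}(G/Φ)`, it suffices to show that the
preimage `T` of `O_{p',p}(G/Φ)` lies in `O_{p',p}(G)`; the two quotients are then isomorphic.
Let `K` be the preimage of `O_{p'}(G/Φ)` and `P` the Sylow `p`-subgroup of the nilpotent group `Φ`,
which is normal in `G`. Then `P` is a normal Sylow subgroup of `K`, so `K = P ⋊ H` by
Schur–Zassenhaus. As the complements of `P` in `K` are conjugate, the Frattini argument gives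
`G = K N_G(H) = P N_G(H)`, hence `N_G(H) = G` because `P ≤ Φ`. So `H ≤ O_{p'}(G)`, and as `T/K` is a
`p`-group, `T` maps onto a `p`-subgroup of `G/O_{p'}(G)`.

Conjugacy of the complements of a solvable normal Hall subgroup `N` is proved by induction on `|N|`
through `[N, N]`, down to the abelian case, where Mathlib's `QuotientDiff` action applies.
-/

open Subgroup MulAction Pointwise

section Cores

variable {G G' : Type*} [Group G] [Group G'] {p : ℕ}

theorem le_pCore {N : Subgroup G} [N.Normal] (hN : IsPGroup p N) : N ≤ pCore p G :=
  le_sSup ⟨‹_›, hN⟩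

theorem le_pPrimeCore {N : Subgroup G} [N.Normal] (hN : (Nat.card N).Coprime p) :
    N ≤ pPrimeCore p G :=
  le_sSup ⟨‹_›, hN⟩

theorem card_sup_dvd_of_normal (A B : Subgroup G) [A.Normal] :
    Nat.card (A ⊔ B : Subgroup G) ∣ Nat.card A * Nat.card B := by
  rw [← relIndex_bot_left, ← relIndex_mul_relIndex ⊥ A (A ⊔ B) bot_le le_sup_left,
    relIndex_sup_left, relIndex_bot_left]
  exact mul_dvd_mul_left _ (relIndex_dvd_card A B)

instance OpPrimeP_normal : (OpPrimeP p G).Normal := by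
  unfold OpPrimeP; infer_instance

theorem le_OpPrimeP_of_isPGroup_map {T : Subgroup G} [T.Normal]
    (hT : IsPGroup p (T.map (QuotientGroup.mk' (pPrimeCore p G)))) : T ≤ OpPrimeP p G :=
  have := Normal.map ‹T.Normal› _ (QuotientGroup.mk'_surjective (pPrimeCore p G))
  fun _ ht => le_pCore hT (mem_map_of_mem _ ht)

variable [Finite G]

theorem isPGroup_pCore [Fact p.Prime] : IsPGroup p (pCore p G) := by
  have hclosed : SupClosed {N : Subgroup G | N.Normal ∧ IsPGroup p N} := by
    rintro A ⟨hA, hAp⟩ B ⟨hB, hBp⟩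
    exact ⟨Subgroup.sup_normal A B, hAp.to_sup_of_normal_right hBp⟩
  exact (hclosed.sSup_mem (Set.toFinite _) ⟨normal_bot, IsPGroup.of_bot⟩ le_rfl).2

theorem coprime_card_pPrimeCore : (Nat.card (pPrimeCore p G)).Coprime p := by
  have hclosed : SupClosed {N : Subgroup G | N.Normal ∧ (Nat.card N).Coprime p} := by
    rintro A ⟨hA, hAp⟩ B ⟨hB, hBp⟩
    exact ⟨Subgroup.sup_normal A B,
      (Nat.Coprime.mul_left hAp hBp).coprime_dvd_left (card_sup_dvd_of_normal A B)⟩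
  exact (hclosed.sSup_mem (Set.toFinite _) ⟨normal_bot, by simp⟩ le_rfl).2

theorem map_pPrimeCore_le {f : G →* G'} (hf : Function.Surjective f) :
    (pPrimeCore p G).map f ≤ pPrimeCore p G' :=
  haveI := (pPrimeCore_normal p G).map f hf
  le_pPrimeCore (coprime_card_pPrimeCore.coprime_dvd_left (card_map_dvd ..))

theorem map_pCore_le [Fact p.Prime] {f : G →* G'} (hf : Function.Surjective f) :
    (pCore p G).map f ≤ pCore p G' :=
  haveI := (pCore_normal p G).map f hf
  le_pCore (isPGroup_pCore.map f)

theorem map_OpPrimeP_le [Fact p.Prime] {f : G →* G'} (hf : Function.Surjective f) :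
    (OpPrimeP p G).map f ≤ OpPrimeP p G' := by
  have hle : pPrimeCore p G ≤ (pPrimeCore p G').comap f :=
    map_le_iff_le_comap.mp (map_pPrimeCore_le hf)
  let f' := QuotientGroup.map _ _ f hle
  have hf' : Function.Surjective f' :=
    QuotientGroup.map_surjective_of_surjective _ _ f (QuotientGroup.mk_surjective.comp hf) hle
  rintro _ ⟨x, hx, rfl⟩
  exact map_pCore_le hf' ⟨_, hx, rfl⟩

end Cores

section Complements

variable {G G' : Type*} [Group G] [Group G']

theorem map_conj_smul (f : G →* G') (g : G) (H : Subgroup G) :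
    (MulAut.conj g • H).map f = MulAut.conj (f g) • H.map f := by
  ext x
  simp only [mem_map, mem_smul_pointwise_iff_exists, MulAut.smul_def, MulAut.conj_apply]
  constructor
  · rintro ⟨_, ⟨y, hy, rfl⟩, rfl⟩
    exact ⟨f y, ⟨y, hy, rfl⟩, by simp⟩
  · rintro ⟨_, ⟨y, hy, rfl⟩, rfl⟩
    exact ⟨_, ⟨y, hy, rfl⟩, by simp⟩

theorem card_conj_smul (g : G) (H : Subgroup G) : Nat.card ↥(MulAut.conj g • H) = Nat.card H :=
  Nat.card_congr (equivSMul (MulAut.conj g) H).toEquiv.symm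

theorem card_subgroupOf_of_le {H K : Subgroup G} (h : H ≤ K) :
    Nat.card (H.subgroupOf K) = Nat.card H :=
  Nat.card_congr (subgroupOfEquivOfLe h).toEquiv

theorem relIndex_eq_card_of_coprime {M H : Subgroup G}
    (h : (Nat.card M).Coprime (Nat.card H)) : M.relIndex H = Nat.card H := by
  have hdisj : M ⊓ H = ⊥ := disjoint_iff.mp (disjoint_of_coprime_natCard h)
  rw [← inf_relIndex_right, hdisj, relIndex_bot_left]

theorem commutator_self_lt_of_isSolvable {N : Subgroup G} [Group.IsSolvable N] (hN : N ≠ ⊥) :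
    ⁅N, N⁆ < N := by
  have : Nontrivial N := (nontrivial_iff_ne_bot N).mpr hN
  rw [← N.range_subtype, MonoidHom.range_eq_map, ← map_commutator, map_subtype_lt_map_subtype]
  exact Group.IsSolvable.commutator_lt_top_of_nontrivial N

theorem index_map_mk'_of_le {M N : Subgroup G} [M.Normal] (hMN : M ≤ N) :
    (N.map (QuotientGroup.mk' M)).index = N.index :=
  index_map_eq _ (QuotientGroup.mk'_surjective M) ((QuotientGroup.ker_mk' M).le.trans hMN)

theorem coprime_card_map_mk'_index {M N : Subgroup G} [M.Normal] (hMN : M ≤ N)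
    (hN : (Nat.card N).Coprime N.index) :
    (Nat.card (N.map (QuotientGroup.mk' M))).Coprime (N.map (QuotientGroup.mk' M)).index :=
  index_map_mk'_of_le hMN ▸ hN.coprime_dvd_left (card_map_dvd ..)

def ComplementsConjugate (N : Subgroup G) : Prop :=
  ∀ ⦃H₁ H₂ : Subgroup G⦄, IsComplement' N H₁ → IsComplement' N H₂ →
    ∃ g : G, MulAut.conj g • H₁ = H₂

variable [Finite G]

theorem card_lt_card_of_lt {H K : Subgroup G} (h : H < K) : Nat.card H < Nat.card K :=
  (card_le_of_le h.le).lt_of_ne fun hc => h.ne (eq_of_le_of_card_ge h.le hc.ge)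

theorem isComplement'_iff_card_eq_index {N H : Subgroup G} (hN : (Nat.card N).Coprime N.index) :
    IsComplement' N H ↔ Nat.card H = N.index :=
  ⟨fun h => h.symm.index_eq_card.symm,
    fun hH => isComplement'_of_coprime (by rw [hH, card_mul_index]) (hH ▸ hN)⟩

theorem card_map_mk'_lt {M N : Subgroup G} [M.Normal] (hMN : M ≤ N) (hM : M ≠ ⊥) :
    Nat.card (N.map (QuotientGroup.mk' M)) < Nat.card N := by
  have hcard := relIndex_mul_relIndex ⊥ M N bot_le hMN
  rw [relIndex_bot_left, relIndex_bot_left] at hcard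
  rw [← relIndex_ker, QuotientGroup.ker_mk', ← hcard]
  exact lt_mul_left (pos_of_mul_pos_right (hcard ▸ Nat.card_pos) (Nat.zero_le _))
    ((one_lt_card_iff_ne_bot M).mpr hM)

def quotientDiffOfIsComplement' {N H : Subgroup G} [IsMulCommutative N]
    (hH : IsComplement' N H) : N.QuotientDiff :=
  Quotient.mk'' ⟨H, hH.symm⟩

theorem stabilizer_quotientDiffOfIsComplement' {N H : Subgroup G} [N.Normal] [IsMulCommutative N]
    (hN : (Nat.card N).Coprime N.index) (hH : IsComplement' N H) :
    stabilizer G (quotientDiffOfIsComplement' hH) = H := by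
  refine (eq_of_le_of_card_ge (fun g hg => ?_) ?_).symm
  · rw [mem_stabilizer_iff]
    exact congrArg Quotient.mk'' (Subtype.ext (op_smul_coe_set (inv_mem hg) :))
  · have := (isComplement'_stabilizer_of_coprime
      (α := quotientDiffOfIsComplement' hH) hN).card_mul_card
    rw [← hH.card_mul_card] at this
    exact (Nat.eq_of_mul_eq_mul_left Nat.card_pos this).le

theorem complementsConjugate_of_isMulCommutative {N : Subgroup G} [N.Normal] [IsMulCommutative N]
    (hN : (Nat.card N).Coprime N.index) : ComplementsConjugate N := by
  intro H₁ H₂ hc₁ hc₂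
  obtain ⟨n, hn⟩ := Subgroup.exists_smul_eq hN (quotientDiffOfIsComplement' hc₁)
    (quotientDiffOfIsComplement' hc₂)
  refine ⟨n, ?_⟩
  rw [← stabilizer_quotientDiffOfIsComplement' hN hc₁,
    ← stabilizer_quotientDiffOfIsComplement' hN hc₂, ← hn, Subgroup.smul_def n,
    stabilizer_smul_eq_stabilizer_map_conj]
  rfl

theorem ComplementsConjugate.of_quotient {M N : Subgroup G} [M.Normal] (hMN : M ≤ N)
    (hN : (Nat.card N).Coprime N.index)
    (hquot : ComplementsConjugate (N.map (QuotientGroup.mk' M)))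
    (hsub : ∀ L : Subgroup G, M ≤ L → (Nat.card M).Coprime (M.relIndex L) →
      ComplementsConjugate (M.subgroupOf L)) :
    ComplementsConjugate N := by
  intro H₁ H₂ hc₁ hc₂
  rw [isComplement'_iff_card_eq_index hN] at hc₁ hc₂
  set π := QuotientGroup.mk' M
  have hπ : Function.Surjective π := QuotientGroup.mk'_surjective M
  have hker : π.ker = M := QuotientGroup.ker_mk' M
  have hrelIndex {H : Subgroup G} (hH : Nat.card H = N.index) : M.relIndex H = N.index := by
    rw [relIndex_eq_card_of_coprime ((hH ▸ hN).coprime_dvd_left (card_dvd_of_le hMN)), hH]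
  have hcomplπ {H : Subgroup G} (hH : Nat.card H = N.index) :
      IsComplement' (N.map π) (H.map π) := by
    rw [isComplement'_iff_card_eq_index (coprime_card_map_mk'_index hMN hN), ← relIndex_ker, hker,
      hrelIndex hH, index_map_mk'_of_le hMN]
  obtain ⟨g', hg'⟩ := hquot (hcomplπ hc₁) (hcomplπ hc₂)
  obtain ⟨g, rfl⟩ := hπ g'
  rw [← map_conj_smul] at hg'
  set H₁' := MulAut.conj g • H₁
  have hsup : H₁' ⊔ M = H₂ ⊔ M := by
    rw [← hker, ← comap_map_eq, ← comap_map_eq, hg']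
  set L := H₂ ⊔ M
  have hH₁'L : H₁' ≤ L := hsup ▸ le_sup_left
  have hcopM : (Nat.card M).Coprime (M.relIndex L) := by
    rw [relIndex_sup_right, hrelIndex hc₂]
    exact hN.coprime_dvd_left (card_dvd_of_le hMN)
  have hindex : (M.subgroupOf L).index = N.index := by
    rw [← relIndex, relIndex_sup_right, hrelIndex hc₂]
  have hcop : (Nat.card (M.subgroupOf L)).Coprime (M.subgroupOf L).index := by
    rw [card_subgroupOf_of_le le_sup_right]
    exact hcopM
  obtain ⟨l, hl⟩ := hsub L le_sup_right hcopM
    (H₁ := H₁'.subgroupOf L) (H₂ := H₂.subgroupOf L)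
    ((isComplement'_iff_card_eq_index hcop).mpr (by
      rw [card_subgroupOf_of_le hH₁'L, card_conj_smul, hindex, hc₁]))
    ((isComplement'_iff_card_eq_index hcop).mpr (by
      rw [card_subgroupOf_of_le le_sup_left, hindex, hc₂]))
  refine ⟨l * g, ?_⟩
  have := congrArg (map L.subtype) hl
  rw [map_conj_smul, subgroupOf_map_subtype, subgroupOf_map_subtype, inf_of_le_left hH₁'L,
    inf_of_le_left le_sup_left] at this
  rw [map_mul, mul_smul]
  exact this

end Complements

theorem complementsConjugate_of_coprime {G : Type*} [Group G] [Finite G] {N : Subgroup G}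
    [N.Normal] [Group.IsSolvable N] (hN : (Nat.card N).Coprime N.index) :
    ComplementsConjugate N := by
  induction hn : Nat.card N using Nat.strong_induction_on generalizing G with
  | _ n ih =>
  by_cases hab : IsMulCommutative N
  · exact complementsConjugate_of_isMulCommutative hN
  have hM : ⁅N, N⁆ ≠ ⊥ := mt commutator_self_eq_bot_iff.mp hab
  have hMN : ⁅N, N⁆ < N :=
    commutator_self_lt_of_isSolvable (ne_bot_of_le_ne_bot hM (commutator_le_right N N))
  refine ComplementsConjugate.of_quotient hMN.le hN ?_ fun L hL hcop => ?_
  · have : (N.map (QuotientGroup.mk' ⁅N, N⁆)).Normal :=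
      Normal.map ‹_› _ (QuotientGroup.mk'_surjective _)
    have : Group.IsSolvable (N.map (QuotientGroup.mk' ⁅N, N⁆)) :=
      Group.isSolvable_of_surjective (MonoidHom.subgroupMap_surjective _ N)
    exact ih _ (hn ▸ card_map_mk'_lt hMN.le hM) (coprime_card_map_mk'_index hMN.le hN) rfl
  · have : Group.IsSolvable (⁅N, N⁆.subgroupOf L) :=
      Group.isSolvable_of_isSolvable_injective (f := (inclusion hMN.le).comp
        (subgroupOfEquivOfLe hL).toMonoidHom)
        ((inclusion_injective hMN.le).comp (subgroupOfEquivOfLe hL).injective :)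
    refine ih _ ?_ ?_ rfl <;> rw [card_subgroupOf_of_le hL]
    · exact hn ▸ card_lt_card_of_lt hMN
    · exact hcop

theorem IsPGroup.map_of_isPGroup_map_ker {G Q R : Type*} [Group G] [Group Q] [Group R] {p : ℕ}
    {ψ : G →* Q} {ρ : G →* R} {T : Subgroup G} (hψ : IsPGroup p (T.map ψ))
    (hker : IsPGroup p (ψ.ker.map ρ)) : IsPGroup p (T.map ρ) := by
  rintro ⟨_, t, ht, rfl⟩
  obtain ⟨k, hk⟩ := hψ ⟨ψ t, mem_map_of_mem ψ ht⟩
  have htk : t ^ p ^ k ∈ ψ.ker := by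
    simpa [MonoidHom.mem_ker] using congrArg Subtype.val hk
  obtain ⟨l, hl⟩ := hker ⟨ρ (t ^ p ^ k), mem_map_of_mem ρ htk⟩
  exact ⟨k + l, Subtype.ext (by simpa [pow_add, pow_mul] using congrArg Subtype.val hl)⟩

section Frattini

variable {G : Type*} [Group G]

theorem conj_smul_eq_self_iff {g : G} {H : Subgroup G} :
    MulAut.conj g • H = H ↔ g ∈ normalizer H := by
  rw [← conjAct_pointwise_smul_iff]
  rfl

theorem sup_normalizer_eq_top_of_forall_conj {K H : Subgroup G}
    (h : ∀ g : G, ∃ k ∈ K, MulAut.conj g • H = MulAut.conj k • H) :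
    K ⊔ normalizer H = ⊤ := by
  refine top_le_iff.mp fun g _ => ?_
  obtain ⟨k, hk, hgk⟩ := h g
  rw [← mul_inv_cancel_left k g]
  refine mul_mem_sup hk (conj_smul_eq_self_iff.mp ?_)
  rw [map_mul, mul_smul, hgk, ← mul_smul, ← map_mul, inv_mul_cancel, map_one, one_smul]

variable [Finite G]

theorem sup_normalizer_eq_top_of_isComplement' {K : Subgroup G} [K.Normal] {N H : Subgroup K}
    [N.Normal] [Group.IsSolvable N] (hN : (Nat.card N).Coprime N.index) (hH : IsComplement' N H) :
    K ⊔ normalizer (H.map K.subtype : Set G) = ⊤ := by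
  refine sup_normalizer_eq_top_of_forall_conj fun g => ?_
  have hgK : MulAut.conj g • H.map K.subtype ≤ K := by
    rintro - ⟨x, hx, rfl⟩
    exact ‹K.Normal›.conj_mem x (map_subtype_le H hx) g
  have hcard : Nat.card ((MulAut.conj g • H.map K.subtype).subgroupOf K) = N.index := by
    rw [card_subgroupOf_of_le hgK, card_conj_smul, card_map_of_injective K.subtype_injective,
      hH.symm.index_eq_card]
  obtain ⟨k, hk⟩ := complementsConjugate_of_coprime hN hH
    ((isComplement'_iff_card_eq_index hN).mpr hcard)
  refine ⟨k, k.2, ?_⟩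
  have := congrArg (map K.subtype) hk
  rwa [map_conj_smul, subgroupOf_map_subtype, inf_of_le_left hgK, eq_comm] at this

variable {p : ℕ} [Fact p.Prime]

theorem le_sup_pPrimeCore_of_le_frattini {P K : Subgroup G} [P.Normal] [K.Normal] (hPK : P ≤ K)
    (hPΦ : P ≤ frattini G) (hP : IsPGroup p P) (hindex : ¬ p ∣ P.relIndex K) :
    K ≤ P ⊔ pPrimeCore p G := by
  have hindex' : (P.relIndex K).Coprime p :=
    ((Nat.Prime.coprime_iff_not_dvd Fact.out).mpr hindex).symm
  set P' := P.subgroupOf K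
  have hcop : (Nat.card P').Coprime P'.index := by
    obtain ⟨k, hk⟩ := IsPGroup.iff_card.mp hP
    rw [card_subgroupOf_of_le hPK, hk]
    exact (Nat.Coprime.pow_right k hindex').symm
  have : Group.IsNilpotent P' := (hP.of_equiv (subgroupOfEquivOfLe hPK).symm).isNilpotent
  obtain ⟨H', hH'⟩ := exists_right_complement'_of_coprime hcop
  set H := H'.map K.subtype
  have hcardH : Nat.card H = P.relIndex K := by
    rw [card_map_of_injective K.subtype_injective]
    exact hH'.symm.index_eq_card.symm
  have hKPH : P ⊔ H = K := by
    have := congrArg (map K.subtype) hH'.sup_eq_top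
    rwa [Subgroup.map_sup, subgroupOf_map_subtype, inf_of_le_left hPK, ← MonoidHom.range_eq_map,
      range_subtype] at this
  have hnorm : normalizer (H : Set G) = ⊤ := by
    refine frattini_nongenerating (top_le_iff.mp ?_)
    rw [← sup_normalizer_eq_top_of_isComplement' hcop hH']
    refine sup_le ?_ le_sup_left
    rw [← hKPH]
    exact sup_le (hPΦ.trans le_sup_right) (le_normalizer.trans le_sup_left)
  have : H.Normal := normalizer_eq_top_iff.mp hnorm
  have hHA : H ≤ pPrimeCore p G := le_pPrimeCore (hcardH ▸ hindex')
  rw [← hKPH]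
  exact sup_le_sup_left hHA P

theorem exists_normal_sylow_le_frattini : ∃ P : Subgroup G, P.Normal ∧ IsPGroup p P ∧
    P ≤ frattini G ∧ ¬ p ∣ P.relIndex (frattini G) := by
  obtain ⟨P⟩ : Nonempty (Sylow p (frattini G)) := inferInstance
  refine ⟨P.map (frattini G).subtype,
    normalizer_eq_top_iff.mp (frattini_nongenerating (Sylow.normalizer_sup_eq_top P)),
    P.2.map _, map_subtype_le _, ?_⟩
  have hindex := relIndex_map_map_of_injective (P : Subgroup (frattini G)) ⊤
    (frattini G).subtype_injective
  rw [← MonoidHom.range_eq_map, range_subtype, relIndex_top_right] at hindex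
  exact hindex ▸ P.not_dvd_index

theorem comap_OpPrimeP_frattini_le :
    (OpPrimeP p (G ⧸ frattini G)).comap (QuotientGroup.mk' (frattini G)) ≤ OpPrimeP p G := by
  set π := QuotientGroup.mk' (frattini G)
  set B := pPrimeCore p (G ⧸ frattini G)
  set ψ := (QuotientGroup.mk' B).comp π
  have hψ : ψ.ker = B.comap π := by
    rw [← MonoidHom.comap_ker, QuotientGroup.ker_mk']
  have hΦK : frattini G ≤ B.comap π := (QuotientGroup.ker_mk' _).symm.le.trans (π.ker_le_comap B)
  obtain ⟨P, hPn, hP, hPΦ, hPindex⟩ := exists_normal_sylow_le_frattini (G := G) (p := p)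
  have hindex : ¬ p ∣ P.relIndex (B.comap π) := by
    have hΦindex := relIndex_ker (K := B.comap π) π
    rw [QuotientGroup.ker_mk', map_comap_eq_self_of_surjective (QuotientGroup.mk'_surjective _)]
      at hΦindex
    rw [← relIndex_mul_relIndex P _ _ hPΦ hΦK, hΦindex]
    exact (Nat.Prime.not_dvd_mul Fact.out hPindex
      ((Nat.Prime.coprime_iff_not_dvd Fact.out).mp coprime_card_pPrimeCore.symm))
  have hK := le_sup_pPrimeCore_of_le_frattini (hPΦ.trans hΦK) hPΦ hP hindex
  refine le_OpPrimeP_of_isPGroup_map (IsPGroup.map_of_isPGroup_map_ker (ψ := ψ) ?_ ?_)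
  · rw [OpPrimeP, comap_comap]
    exact isPGroup_pCore.to_le (map_comap_le _ _)
  · rw [hψ]
    refine (hP.map (QuotientGroup.mk' (pPrimeCore p G))).to_le ((map_mono hK).trans ?_)
    rw [Subgroup.map_sup, QuotientGroup.map_mk'_self, sup_bot_eq]

end Frattini

theorem hawkes_EPhi_closed_general {G : Type*} [Group G] [Finite G] {p q : ℕ}
    (hp : p.Prime) :
    q ∣ Nat.card (G ⧸ OpPrimeP p G) ↔
      q ∣ Nat.card ((G ⧸ frattini G) ⧸ OpPrimeP p (G ⧸ frattini G)) := by
  have := Fact.mk hp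
  have hπ := QuotientGroup.mk'_surjective (frattini G)
  have h : OpPrimeP p G = (OpPrimeP p (G ⧸ frattini G)).comap (QuotientGroup.mk' (frattini G)) :=
    le_antisymm (map_le_iff_le_comap.mp (map_OpPrimeP_le hπ)) comap_OpPrimeP_frattini_le
  rw [← index_eq_card, ← index_eq_card, h, index_comap_of_surjective _ hπ]

/-- The Hawkes graph function is `E_Φ`-closed: `q` divides `|G / O_{p',p}(G)|` iff `q` divides
`|(G/Φ(G)) / O_{p',p}(G/Φ(G))|`, where `Φ(G)` is the Frattini subgroup. -/
theorem hawkes_EPhi_closed {G : Type*} [Group G] [Finite G] {p q : ℕ}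
    (hp : p.Prime) (hq : q.Prime) :
    q ∣ Nat.card (G ⧸ OpPrimeP p G) ↔
      q ∣ Nat.card ((G ⧸ frattini G) ⧸ OpPrimeP p (G ⧸ frattini G)) :=
  hawkes_EPhi_closed_general hp
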